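/- arXiv:0806.0832 — 2 statements merged into one kernel-verified Lean document; each statement's English description precedes it below -/
import Mathlib

section
/- Let C be an abelian category (or any additive category) and F, G : Mod R → C right exact functors commuting with arbitrary direct sums. If τ, τ' : F → G are natural transformations with τ_R = τ'_R (their components at the right R-module R agree), then τ = τ'. -/
/-!
`R` is a separator of `Mod R`, so every module `M` is a quotient of the coproduct of copies of `R`
indexed by `Hom(R, M)`. Since `F` preserves this coproduct, `τ` and `τ'` agree on it, and since `F`
(being right exact) preserves epimorphisms, they agree on `M`.
-/

open CategoryTheory CategoryTheory.Limits

universe u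

namespace CategoryTheory.NatTrans

section

variable {A C : Type*} [Category A] [Category C] {F G : A ⥤ C} (τ τ' : F ⟶ G)

theorem app_pt_eq_of_isColimit {J : Type*} [Category J] {D : J ⥤ A} {c : Cocone D}
    (hc : IsColimit c) [PreservesColimit D F] (h : ∀ j, τ.app (D.obj j) = τ'.app (D.obj j)) :
    τ.app c.pt = τ'.app c.pt :=
  (isColimitOfPreserves F hc).hom_ext fun j => by
    simp only [Functor.mapCocone_ι_app, naturality, h]

theorem app_eq_of_epi {X Y : A} (f : X ⟶ Y) [Epi (F.map f)] (h : τ.app X = τ'.app X) :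
    τ.app Y = τ'.app Y :=
  (cancel_epi (F.map f)).1 (by rw [naturality, naturality, h])

end

theorem ext_of_isSeparator {A C : Type*} [Category.{u} A] [Category C] {F G : A ⥤ C} {S : A}
    (hS : IsSeparator S) [∀ X : A, HasCoproduct fun _ : S ⟶ X => S] [F.PreservesEpimorphisms]
    [∀ ι : Type u, PreservesColimitsOfShape (Discrete ι) F] (τ τ' : F ⟶ G)
    (h : τ.app S = τ'.app S) : τ = τ' := by
  ext X
  have := (isSeparator_iff_epi S).1 hS X
  exact app_eq_of_epi τ τ' (Limits.Sigma.desc fun f : S ⟶ X => f)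
    (app_pt_eq_of_isColimit τ τ' (colimit.isColimit _) fun _ => h)

end CategoryTheory.NatTrans

theorem ModuleCat.isSeparator_self (R : Type u) [Ring R] : IsSeparator (ModuleCat.of R R) :=
    fun X _ f g h ↦ by
  ext x
  simpa using congr($(h _ (by simp) (ModuleCat.ofHom (LinearMap.toSpanSingleton R X x))) 1)

/-- Natural transformations between right exact functors `Mod R ⥤ C` commuting with
direct sums are determined by their component at the right `R`-module `R`.
(Right `R`-modules are left `Rᵐᵒᵖ`-modules.) -/
theorem natTrans_ext_of_app_self_eq
    (R : Type u) [Ring R] {C : Type*} [Category.{u} C] [Abelian C]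
    (F G : ModuleCat.{u} Rᵐᵒᵖ ⥤ C)
    [PreservesFiniteColimits F] [PreservesFiniteColimits G]
    [∀ ι : Type u, PreservesColimitsOfShape (Discrete ι) F]
    [∀ ι : Type u, PreservesColimitsOfShape (Discrete ι) G]
    (τ τ' : F ⟶ G)
    (h : τ.app (ModuleCat.of Rᵐᵒᵖ Rᵐᵒᵖ) = τ'.app (ModuleCat.of Rᵐᵒᵖ Rᵐᵒᵖ)) :
    τ = τ' :=
  NatTrans.ext_of_isSeparator (ModuleCat.isSeparator_self Rᵐᵒᵖ) τ τ' h
end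

section
/- (Watts's theorem, classical form) Let R and S be rings and F : Mod R → Mod S a right exact functor that commutes with direct limits (equivalently, with arbitrary direct sums). Then F is naturally isomorphic to − ⊗_R B, where B = F(R) is an R-S-bimodule with left R-action given by x·b := F(μ_x)(b) for μ_x left multiplication by x on R. -/
/-!
The comparison `T ⟶ F` is the mate, under `T ⊣ Hom_S(B, -)`, of the natural map
`M → Hom_S(B, F M)`, `m ↦ F (r ↦ m r)`; at `M = R` its inverse is `ξ : B ⟶ T R`.
Both `T` (a left adjoint) and `F` preserve direct sums and cokernels, and every module is the
cokernel of a map between free modules, so the comparison is an isomorphism everywhere.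
-/

open CategoryTheory CategoryTheory.Limits MulOpposite

universe u

section Preamble

variable (k : Type*) [CommRing k] (R : Type u) [Ring R] [Algebra k R]
variable (A : Type*) [Category.{u} A] [Preadditive A] [CategoryTheory.Linear k A]

/-- A left `R`-module in the `k`-linear category `A`: an object together with a
ring homomorphism `ρ : R → End 𝓕` which is `k`-linear, i.e. a `k`-algebra homomorphism. -/
structure LMod where
  X : A
  ρ : R →+* End X
  algebraMap_smul' : ∀ a : k, ρ (algebraMap k R a) = a • (𝟙 X)

variable {k R A}

/-- the `k`-module structure on right `R`-modules obtained by restriction of scalars -/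
noncomputable instance (M : ModuleCat.{u} Rᵐᵒᵖ) : Module k M :=
  RestrictScalars.module k Rᵐᵒᵖ M

instance (M : ModuleCat.{u} Rᵐᵒᵖ) : IsScalarTower k Rᵐᵒᵖ M :=
  RestrictScalars.isScalarTower k Rᵐᵒᵖ M

/-- The `k`-linear structure on the category of right `R`-modules, `a • m = m · γ(a)`. -/
noncomputable instance : CategoryTheory.Linear k (ModuleCat.{u} Rᵐᵒᵖ) where
  homModule _ _ := ModuleCat.Hom.instModule
  smul_comp := by
    intros
    ext
    dsimp only [ModuleCat.hom_comp, ModuleCat.hom_smul, LinearMap.comp_apply]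
    rw [LinearMap.smul_apply, LinearMap.map_smul_of_tower]
    rfl

/-- `Hom_A(𝓕, N)` is a right `R`-module via `α · r := ρ(r) ≫ α`. -/
instance homRMod (F : LMod k R A) (N : A) : Module Rᵐᵒᵖ (F.X ⟶ N) where
  smul r α := F.ρ r.unop ≫ α
  one_smul α := by show F.ρ _ ≫ α = α; simp
  mul_smul r s α := by
    show F.ρ _ ≫ α = F.ρ _ ≫ F.ρ _ ≫ α
    rw [unop_mul, map_mul, End.mul_def, Category.assoc]
  smul_zero r := by show _ ≫ (0 : F.X ⟶ N) = 0; simp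
  smul_add r α β := by show _ ≫ (α + β) = _ ≫ α + _ ≫ β; simp
  add_smul r s α := by
    show F.ρ _ ≫ α = F.ρ _ ≫ α + F.ρ _ ≫ α
    rw [MulOpposite.unop_add, map_add]; exact Preadditive.add_comp _ _ _ _ _ _
  zero_smul α := by show F.ρ _ ≫ α = 0; rw [MulOpposite.unop_zero, map_zero]; exact Limits.zero_comp

lemma homRMod_smul_def (F : LMod k R A) {N : A} (r : Rᵐᵒᵖ) (α : F.X ⟶ N) :
    r • α = F.ρ r.unop ≫ α := rfl

/-- The functor `Hom_A(𝓕, -) : A ⥤ Mod R`. -/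
noncomputable def homFunctor (F : LMod k R A) : A ⥤ ModuleCat.{u} Rᵐᵒᵖ where
  obj N := ModuleCat.of Rᵐᵒᵖ (F.X ⟶ N)
  map {N N'} f := ModuleCat.ofHom
    { toFun := fun α => α ≫ f
      map_add' := fun α β => Preadditive.add_comp _ _ _ _ _ _
      map_smul' := fun r α => by
        show (F.ρ r.unop ≫ α) ≫ f = F.ρ r.unop ≫ (α ≫ f)
        rw [Category.assoc] }
  map_id N := by apply ModuleCat.hom_ext; apply LinearMap.ext; intro α; exact Category.comp_id α
  map_comp f g := by apply ModuleCat.hom_ext; apply LinearMap.ext; intro α; exact (Category.assoc _ _ _).symm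

/-- `R` as a right module over itself. -/
noncomputable abbrev RR : ModuleCat.{u} Rᵐᵒᵖ := ModuleCat.of Rᵐᵒᵖ Rᵐᵒᵖ

variable (R) in
/-- left multiplication `μ_x` by `x` on `R`, a right `R`-module map -/
def mulMap (x : R) : (RR : ModuleCat.{u} Rᵐᵒᵖ) ⟶ RR := ModuleCat.ofHom {
  toFun r := op (x * r.unop)
  map_add' r s := by
    apply unop_injective
    show x * (r + s).unop = _
    rw [show (r + s).unop = r.unop + s.unop from rfl, mul_add]; rfl
  map_smul' s t := by
    apply unop_injective
    show x * (s • t).unop = ((s • op (x * t.unop)).unop)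
    rw [show (s • t).unop = t.unop * s.unop from rfl,
      show (s • op (x * t.unop)).unop = (x * t.unop) * s.unop from rfl, mul_assoc] }

/-- Morphisms `𝓕 → 𝓖` of left `R`-modules in `A` induce natural transformations
`Hom_A(𝓖,-) ⟶ Hom_A(𝓕,-)`. -/
noncomputable def homPre {F G : LMod k R A} (φ : F.X ⟶ G.X)
    (h : ∀ r : R, F.ρ r ≫ φ = φ ≫ G.ρ r) : homFunctor G ⟶ homFunctor F where
  app N := ModuleCat.ofHom
    { toFun := fun α => φ ≫ α
      map_add' := fun α β => Preadditive.comp_add _ _ _ _ _ _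
      map_smul' := fun r α => by
        show φ ≫ G.ρ r.unop ≫ α = F.ρ r.unop ≫ φ ≫ α
        rw [← Category.assoc, ← h, Category.assoc] }
  naturality N N' f := by apply ModuleCat.hom_ext; apply LinearMap.ext; intro α; exact (Category.assoc _ _ _).symm

/-- `M ⊗ φ` : the natural transformation `- ⊗_R 𝓕 ⟶ - ⊗_R 𝓖` induced by `φ : 𝓕 ⟶ 𝓖`,
obtained as the conjugate (mate) of `homPre φ`. -/
noncomputable def tensorMap {F G : LMod k R A} {TF TG : ModuleCat.{u} Rᵐᵒᵖ ⥤ A}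
    (adjF : TF ⊣ homFunctor F) (adjG : TG ⊣ homFunctor G) (φ : F.X ⟶ G.X)
    (h : ∀ r : R, F.ρ r ≫ φ = φ ≫ G.ρ r) : TF ⟶ TG :=
  (conjugateEquiv adjG adjF).symm (homPre φ h)

/-- The canonical map `ξ_𝓕 : 𝓕 ⟶ R ⊗_R 𝓕`. -/
noncomputable def xi {F : LMod k R A} {TF : ModuleCat.{u} Rᵐᵒᵖ ⥤ A}
    (adjF : TF ⊣ homFunctor F) : F.X ⟶ TF.obj RR :=
  (adjF.unit.app RR) (1 : Rᵐᵒᵖ)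

end Preamble

lemma NatTrans.isIso_app_colimit {C D J : Type*} [Category C] [Category D] [Category J]
    {G H : C ⥤ D} (β : G ⟶ H) (K : J ⥤ C) [HasColimit K]
    [PreservesColimit K G] [PreservesColimit K H] (h : ∀ j, IsIso (β.app (K.obj j))) :
    IsIso (β.app (colimit K)) := by
  have : ∀ j, IsIso ((Functor.whiskerLeft K β).app j) := h
  have : IsIso (Functor.whiskerLeft K β) := NatIso.isIso_of_isIso_app _
  have key : β.app (colimit K) = (preservesColimitIso G K).hom ≫
      colimMap (Functor.whiskerLeft K β) ≫ (preservesColimitIso H K).inv := by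
    rw [← Iso.inv_comp_eq]
    apply colimit.hom_ext
    intro j
    simp [ι_preservesColimitIso_inv_assoc]
  rw [key]
  infer_instance

namespace ModuleCat

variable {R : Type u} [Ring R]

abbrev toSpanSingleton (M : ModuleCat.{u} R) (m : M) : of R R ⟶ M :=
  ofHom (LinearMap.toSpanSingleton R M m)

lemma toSpanSingleton_comp {M N : ModuleCat.{u} R} (m : M) (f : M ⟶ N) :
    toSpanSingleton M m ≫ f = toSpanSingleton N (f m) := by
  ext; simp

lemma toSpanSingleton_add (M : ModuleCat.{u} R) (m m' : M) :
    toSpanSingleton M (m + m') = toSpanSingleton M m + toSpanSingleton M m' := by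
  ext; simp

lemma toSpanSingleton_self_one : toSpanSingleton (of R R) 1 = 𝟙 (of R R) := by
  ext; simp

lemma epi_sigmaDesc_toSpanSingleton (M : ModuleCat.{u} R) :
    Epi (Sigma.desc fun m : M => toSpanSingleton M m) := by
  rw [epi_iff_surjective]
  intro m
  refine ⟨Sigma.ι (fun _ : M => of R R) m 1, ?_⟩
  rw [← ConcreteCategory.comp_apply, Sigma.ι_desc]
  simp

lemma exists_iso_cokernel_sigma (M : ModuleCat.{u} R) :
    ∃ (I J : Type u) (d : ∐ (fun _ : I => of R R) ⟶ ∐ (fun _ : J => of R R)),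
      Nonempty (M ≅ cokernel d) := by
  let p : ∐ (fun _ : M => of R R) ⟶ M := Sigma.desc fun m => toSpanSingleton M m
  let K : ModuleCat.{u} R := kernel p
  let q : ∐ (fun _ : K => of R R) ⟶ K := Sigma.desc fun k => toSpanSingleton K k
  have := epi_sigmaDesc_toSpanSingleton M
  have := epi_sigmaDesc_toSpanSingleton K
  exact ⟨K, M, q ≫ kernel.ι p, ⟨(isCokernelEpiComp
    (Abelian.epiIsCokernelOfKernel _ (kernelIsKernel p)) q rfl).coconePointUniqueUpToIso
    (colimit.isColimit _)⟩⟩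

end ModuleCat

open ModuleCat

lemma toSpanSingleton_RR_eq_mulMap {R : Type u} [Ring R] (t : Rᵐᵒᵖ) :
    toSpanSingleton RR t = mulMap R t.unop := by
  ext
  simp [mulMap]

section Watts

variable {R : Type u} [Ring R] {S : Type u} [Ring S]
  (F : ModuleCat.{u} Rᵐᵒᵖ ⥤ ModuleCat.{u} Sᵐᵒᵖ) [F.Additive]
  (ρ : R →+* End (F.obj (RR : ModuleCat.{u} Rᵐᵒᵖ)))
  (halg : ∀ a : ℤ, ρ (algebraMap ℤ R a) = a • 𝟙 (F.obj (RR : ModuleCat.{u} Rᵐᵒᵖ)))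

noncomputable def toHomFunctorComp (hρ : ∀ x : R, ρ x = F.map (mulMap R x)) :
    𝟭 _ ⟶ F ⋙ homFunctor (⟨F.obj RR, ρ, halg⟩ : LMod ℤ R (ModuleCat.{u} Sᵐᵒᵖ)) where
  app M := ofHom (Y := (F ⋙ homFunctor _).obj M)
    { toFun m := F.map (toSpanSingleton M m)
      map_add' m m' := by
        simp only [toSpanSingleton_add, F.map_add]; rfl
      map_smul' r m := by
        show F.map (toSpanSingleton M (r • m)) = ρ r.unop ≫ F.map (toSpanSingleton M m)
        rw [hρ, ← toSpanSingleton_RR_eq_mulMap, ← F.map_comp, toSpanSingleton_comp]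
        rfl }
  naturality M N f := by
    ext m
    show F.map (toSpanSingleton N (f m)) = F.map (toSpanSingleton M m) ≫ F.map f
    rw [← F.map_comp, toSpanSingleton_comp]

variable (hρ : ∀ x : R, ρ x = F.map (mulMap R x)) (T : ModuleCat.{u} Rᵐᵒᵖ ⥤ ModuleCat.{u} Sᵐᵒᵖ)
  (adj : T ⊣ homFunctor (⟨F.obj RR, ρ, halg⟩ : LMod ℤ R (ModuleCat.{u} Sᵐᵒᵖ)))

lemma toHomFunctorComp_app_RR_one :
    (toHomFunctorComp F ρ halg hρ).app RR (1 : Rᵐᵒᵖ) = 𝟙 (F.obj RR) := by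
  show F.map (toSpanSingleton RR 1) = _
  rw [toSpanSingleton_self_one, F.map_id]

noncomputable def wattsComparison : T ⟶ F :=
  ((adj.whiskerRight (ModuleCat.{u} Rᵐᵒᵖ)).homEquiv (𝟭 _) F).symm (toHomFunctorComp F ρ halg hρ)

lemma homEquiv_wattsComparison_app (M : ModuleCat.{u} Rᵐᵒᵖ) :
    adj.homEquiv M (F.obj M) ((wattsComparison F ρ halg hρ T adj).app M) =
      (toHomFunctorComp F ρ halg hρ).app M := by
  rw [← Equiv.eq_symm_apply, Adjunction.homEquiv_counit, wattsComparison,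
    Adjunction.homEquiv_counit]
  simp

lemma xi_comp_wattsComparison_app :
    xi adj ≫ (wattsComparison F ρ halg hρ T adj).app RR = 𝟙 _ :=
  congr($(homEquiv_wattsComparison_app F ρ halg hρ T adj RR) (1 : Rᵐᵒᵖ)).trans
    (toHomFunctorComp_app_RR_one F ρ halg hρ)

lemma wattsComparison_app_comp_xi :
    (wattsComparison F ρ halg hρ T adj).app RR ≫ xi adj = 𝟙 _ := by
  apply (adj.homEquiv _ _).injective
  rw [adj.homEquiv_naturality_right, homEquiv_wattsComparison_app, adj.homEquiv_id]
  -- maps out of `R` are compared at `1`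
  ext
  exact congr($(toHomFunctorComp_app_RR_one F ρ halg hρ) ≫ xi adj).trans (Category.id_comp _)

end Watts

/-- Here `- ⊗_R B` is (characterized as) a left adjoint of `Hom_S(B, -) : Mod S ⥤ Mod R`. -/
theorem classical_watts (R : Type u) [Ring R] (S : Type u) [Ring S]
    (F : ModuleCat.{u} Rᵐᵒᵖ ⥤ ModuleCat.{u} Sᵐᵒᵖ) [F.Additive]
    [PreservesFiniteColimits F]
    [∀ ι : Type u, PreservesColimitsOfShape (Discrete ι) F]
    (ρ : R →+* End (F.obj (RR : ModuleCat.{u} Rᵐᵒᵖ)))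
    (hρ : ∀ x : R, ρ x = F.map (mulMap R x))
    (halg : ∀ a : ℤ, ρ (algebraMap ℤ R a) = a • 𝟙 (F.obj (RR : ModuleCat.{u} Rᵐᵒᵖ)))
    (T : ModuleCat.{u} Rᵐᵒᵖ ⥤ ModuleCat.{u} Sᵐᵒᵖ)
    (adj : T ⊣ homFunctor (⟨F.obj RR, ρ, halg⟩ : LMod ℤ R (ModuleCat.{u} Sᵐᵒᵖ))) :
    Nonempty (F ≅ T) := by
  have : T.IsLeftAdjoint := adj.isLeftAdjoint
  let β := wattsComparison F ρ halg hρ T adj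
  have hR : IsIso (β.app RR) :=
    ⟨xi adj, wattsComparison_app_comp_xi F ρ halg hρ T adj,
      xi_comp_wattsComparison_app F ρ halg hρ T adj⟩
  have hfree (ι : Type u) : IsIso (β.app (∐ fun _ : ι => RR)) :=
    NatTrans.isIso_app_colimit β _ fun _ => hR
  have (M : ModuleCat.{u} Rᵐᵒᵖ) : IsIso (β.app M) := by
    obtain ⟨I, J, d, ⟨e⟩⟩ := ModuleCat.exists_iso_cokernel_sigma M
    rw [NatTrans.isIso_app_iff_of_iso β e]
    exact NatTrans.isIso_app_colimit β _ (by rintro (_ | _) <;> exact hfree _)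
  have := NatIso.isIso_of_isIso_app β
  exact ⟨(asIso β).symm⟩
end
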